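/- Let k_1 < k_2 < … < k_n be natural numbers. Then the Wronskian Wr[H_{k_1}, …, H_{k_n}] is a nonzero polynomial whose degree equals (Σ_{i=1}^{n} k_i) − n(n−1)/2. -/

import Mathlib

/-!
Expanding the Wronskian over permutations, the term of `σ` is `∏ⱼ H_{k_j}^{(σ j)}`, of degree at
most `∑ k_j - ∑ σ j = ∑ k_j - n(n-1)/2`, with coefficient `∏ⱼ 2^{k_j} (k_j)_{σ j}` there
(falling factorials). Hence the coefficient of the Wronskian in that degree is
`∏ⱼ 2^{k_j} · det[(k_j)_i]`, and since `(x)_i` is monic of degree `i` in `x` this determinant is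
the Vandermonde determinant `∏_{i<j} (k_j - k_i) ≠ 0`. Only the degree and the leading
coefficient of each `H_k` enter.
-/

open Polynomial MeasureTheory

/-- The physicists' Hermite polynomials: `H 0 = 1`, `H (n+1) = 2X * H n - (H n)'`. -/
noncomputable def pHermite (R : Type*) [CommRing R] : ℕ → Polynomial R
  | 0 => 1
  | n + 1 => 2 * X * pHermite R n - derivative (pHermite R n)

/-- The Wronskian determinant of a finite family of polynomials. -/
noncomputable def polyWronskian {R : Type*} [CommRing R] {n : ℕ}
    (f : Fin n → Polynomial R) : Polynomial R :=
  (Matrix.of fun i j : Fin n => (⇑(derivative (R := R)))^[(i : ℕ)] (f j)).det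

section

variable {R : Type*} [CommRing R]

theorem coeff_prod_sum_of_natDegree_le {ι : Type*} (s : Finset ι) (p : ι → R[X]) (d : ι → ℕ)
    (h : ∀ i ∈ s, (p i).natDegree ≤ d i) :
    (∏ i ∈ s, p i).coeff (∑ i ∈ s, d i) = ∏ i ∈ s, (p i).coeff (d i) := by
  induction s using Finset.cons_induction with
  | empty => simp
  | cons a s _ ih =>
    have hs : ∀ i ∈ s, (p i).natDegree ≤ d i := fun i hi => h i (Finset.mem_cons_of_mem hi)
    rw [Finset.prod_cons, Finset.sum_cons, Finset.prod_cons, ← ih hs,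
      coeff_mul_add_eq_of_natDegree_le (h a (Finset.mem_cons_self a s))
        ((natDegree_prod_le _ _).trans (Finset.sum_le_sum hs))]

section Wronskian

variable {n : ℕ} {f : Fin n → R[X]} {d : Fin n → ℕ}

theorem polyWronskian_eq_sum_perm (f : Fin n → R[X]) :
    polyWronskian f = ∑ σ : Equiv.Perm (Fin n), σ.sign • ∏ j, derivative^[σ j] (f j) :=
  Matrix.det_apply _

theorem sum_tsub_perm {σ : Equiv.Perm (Fin n)} (h : ∀ j, (σ j : ℕ) ≤ d j) :
    ∑ j, (d j - σ j) = ∑ j, d j - ∑ j : Fin n, (j : ℕ) := by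
  rw [Finset.sum_tsub_distrib _ fun j _ => h j, Equiv.sum_comp σ (fun j : Fin n => (j : ℕ))]

theorem prod_iterate_derivative_perm_eq_zero (hf : ∀ j, (f j).natDegree ≤ d j)
    {σ : Equiv.Perm (Fin n)} {j : Fin n} (hj : d j < σ j) :
    ∏ j, derivative^[σ j] (f j) = 0 :=
  Finset.prod_eq_zero (Finset.mem_univ j) (iterate_derivative_eq_zero ((hf j).trans_lt hj))

theorem natDegree_iterate_derivative_perm_le (hf : ∀ j, (f j).natDegree ≤ d j)
    (σ : Equiv.Perm (Fin n)) (j : Fin n) :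
    (derivative^[σ j] (f j)).natDegree ≤ d j - σ j :=
  (natDegree_iterate_derivative _ _).trans (Nat.sub_le_sub_right (hf j) _)

theorem natDegree_prod_iterate_derivative_perm_le (hf : ∀ j, (f j).natDegree ≤ d j)
    (σ : Equiv.Perm (Fin n)) :
    (∏ j, derivative^[σ j] (f j)).natDegree ≤ ∑ j, d j - ∑ j : Fin n, (j : ℕ) := by
  by_cases h : ∀ j, (σ j : ℕ) ≤ d j
  · rw [← sum_tsub_perm h]
    exact (natDegree_prod_le _ _).trans
      (Finset.sum_le_sum fun j _ => natDegree_iterate_derivative_perm_le hf σ j)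
  · push Not at h
    obtain ⟨j, hj⟩ := h
    rw [prod_iterate_derivative_perm_eq_zero hf hj, natDegree_zero]
    exact Nat.zero_le _

theorem coeff_prod_iterate_derivative_perm (hf : ∀ j, (f j).natDegree ≤ d j)
    (σ : Equiv.Perm (Fin n)) :
    (∏ j, derivative^[σ j] (f j)).coeff (∑ j, d j - ∑ j : Fin n, (j : ℕ)) =
      ∏ j, ((f j).coeff (d j) * (d j).descFactorial (σ j)) := by
  by_cases h : ∀ j, (σ j : ℕ) ≤ d j
  · rw [← sum_tsub_perm h, coeff_prod_sum_of_natDegree_le _ _ _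
      fun j _ => natDegree_iterate_derivative_perm_le hf σ j]
    refine Finset.prod_congr rfl fun j _ => ?_
    rw [coeff_iterate_derivative, Nat.sub_add_cancel (h j), nsmul_eq_mul, mul_comm]
  · push Not at h
    obtain ⟨j, hj⟩ := h
    rw [prod_iterate_derivative_perm_eq_zero hf hj, coeff_zero, eq_comm]
    exact Finset.prod_eq_zero (Finset.mem_univ j)
      (by rw [Nat.descFactorial_eq_zero_iff_lt.2 hj, Nat.cast_zero, mul_zero])

theorem natDegree_polyWronskian_le (hf : ∀ j, (f j).natDegree ≤ d j) :
    (polyWronskian f).natDegree ≤ ∑ j, d j - ∑ j : Fin n, (j : ℕ) := by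
  rw [polyWronskian_eq_sum_perm]
  exact natDegree_sum_le_of_forall_le _ _ fun σ _ =>
    (natDegree_smul_le _ _).trans (natDegree_prod_iterate_derivative_perm_le hf σ)

theorem det_descFactorial_eq_det_vandermonde (d : Fin n → ℕ) :
    (Matrix.of fun i j : Fin n => ((d j).descFactorial i : R)).det =
      (Matrix.vandermonde fun j => (d j : R)).det := by
  -- `descPochhammer` is monic of degree `i` only over a domain, so compute over `ℤ` and map.
  have hℤ : (Matrix.of fun i j : Fin n => ((d j).descFactorial i : ℤ)).det =
      (Matrix.vandermonde fun j => (d j : ℤ)).det := by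
    rw [Matrix.det_eval_matrixOfPolynomials_eq_det_vandermonde _ (fun i => descPochhammer ℤ i)
      (descPochhammer_natDegree ℤ ·) (monic_descPochhammer ℤ ·), ← Matrix.det_transpose]
    congr
    ext i j
    simp [descPochhammer_eval_eq_descFactorial]
  have h := congrArg (Int.castRingHom R) hℤ
  rw [RingHom.map_det, RingHom.map_det] at h
  convert h using 2 <;> ext i j <;> simp [Matrix.vandermonde]

theorem coeff_polyWronskian (hf : ∀ j, (f j).natDegree ≤ d j) :
    (polyWronskian f).coeff (∑ j, d j - ∑ j : Fin n, (j : ℕ)) =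
      (∏ j, (f j).coeff (d j)) * (Matrix.vandermonde fun j => (d j : R)).det := by
  rw [← det_descFactorial_eq_det_vandermonde, ← Matrix.det_mul_row, Matrix.det_apply,
    polyWronskian_eq_sum_perm, finsetSum_coeff]
  refine Finset.sum_congr rfl fun σ _ => ?_
  rw [coeff_smul, coeff_prod_iterate_derivative_perm hf σ]
  rfl

variable [IsDomain R] [CharZero R]

theorem coeff_polyWronskian_ne_zero (hd : Function.Injective d) (hf : ∀ j, (f j).degree = d j) :
    (polyWronskian f).coeff (∑ j, d j - ∑ j : Fin n, (j : ℕ)) ≠ 0 := by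
  rw [coeff_polyWronskian fun j => (natDegree_eq_of_degree_eq_some (hf j)).le]
  refine mul_ne_zero (Finset.prod_ne_zero_iff.2 fun j _ => coeff_ne_zero_of_eq_degree (hf j)) ?_
  exact Matrix.det_vandermonde_ne_zero_iff.2 fun i j hij => hd (Nat.cast_injective hij)

theorem polyWronskian_ne_zero (hd : Function.Injective d) (hf : ∀ j, (f j).degree = d j) :
    polyWronskian f ≠ 0 := fun h =>
  coeff_polyWronskian_ne_zero hd hf (by rw [h, coeff_zero])

theorem natDegree_polyWronskian (hd : Function.Injective d) (hf : ∀ j, (f j).degree = d j) :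
    (polyWronskian f).natDegree = ∑ j, d j - ∑ j : Fin n, (j : ℕ) :=
  le_antisymm (natDegree_polyWronskian_le fun j => (natDegree_eq_of_degree_eq_some (hf j)).le)
    (le_natDegree_of_ne_zero (coeff_polyWronskian_ne_zero hd hf))

end Wronskian

theorem natDegree_pHermite_le (m : ℕ) : (pHermite R m).natDegree ≤ m := by
  induction m with
  | zero => simp [pHermite]
  | succ m ih =>
    refine (natDegree_sub_le _ _).trans (max_le ?_ ((natDegree_derivative_le _).trans (by omega)))
    have h2X : (2 * X : R[X]).natDegree ≤ 1 := by compute_degree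
    exact (natDegree_mul_le_of_le h2X ih).trans (by omega)

theorem coeff_pHermite_self (m : ℕ) : (pHermite R m).coeff m = 2 ^ m := by
  induction m with
  | zero => simp [pHermite]
  | succ m ih =>
    have hder : (derivative (pHermite R m)).coeff (m + 1) = 0 :=
      coeff_eq_zero_of_natDegree_lt ((natDegree_derivative_le _).trans_lt (by
        have := natDegree_pHermite_le (R := R) m; omega))
    rw [pHermite, coeff_sub, hder, mul_assoc, coeff_ofNat_mul, coeff_X_mul, ih, sub_zero, pow_succ']

theorem degree_pHermite [CharZero R] (m : ℕ) : (pHermite R m).degree = m := by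
  refine degree_eq_of_le_of_coeff_ne_zero (degree_le_natDegree.trans
    (by exact_mod_cast natDegree_pHermite_le m)) ?_
  rw [coeff_pHermite_self]
  exact_mod_cast pow_ne_zero m two_ne_zero

end

theorem StrictMono.fin_val_le {n : ℕ} {k : Fin n → ℕ} (hk : StrictMono k) (i : Fin n) :
    (i : ℕ) ≤ k i := by
  obtain ⟨i, hi⟩ := i
  induction i with
  | zero => exact Nat.zero_le _
  | succ i ih => exact (ih (by omega)).trans_lt (hk (Fin.mk_lt_mk.2 i.lt_succ_self))

theorem Fin.sum_intCast_val (n : ℕ) : ∑ i : Fin n, ((i : ℕ) : ℤ) = n * (n - 1) / 2 := by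
  refine (Int.ediv_eq_of_eq_mul_left two_ne_zero ?_).symm
  have h := Finset.sum_range_id_mul_two n
  rw [← Fin.sum_univ_eq_sum_range] at h
  rcases n with _ | n
  · simp
  · have h' := congrArg (Nat.cast : ℕ → ℤ) h
    push_cast at h' ⊢
    linarith

theorem stmt8 (n : ℕ) (k : Fin n → ℕ) (hk : StrictMono k) :
    polyWronskian (fun i => pHermite ℝ (k i)) ≠ 0 ∧
    ((polyWronskian (fun i => pHermite ℝ (k i))).natDegree : ℤ)
      = (∑ i : Fin n, (k i : ℤ)) - (n : ℤ) * ((n : ℤ) - 1) / 2 := by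
  have hdeg (i : Fin n) : (pHermite ℝ (k i)).degree = k i := degree_pHermite (k i)
  refine ⟨polyWronskian_ne_zero hk.injective hdeg, ?_⟩
  rw [natDegree_polyWronskian hk.injective hdeg,
    Nat.cast_sub (Finset.sum_le_sum fun i _ => hk.fin_val_le i), ← Fin.sum_intCast_val,
    Nat.cast_sum, Nat.cast_sum]
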